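/- arXiv:1803.04684 — 3 statements merged into one kernel-verified Lean document; each statement's English description precedes it below -/
import Mathlib

section
/- The map sending a function f : A → ℤ/pℤ to the element (α_f, 1), where α_f(g, a) = f(a) for all g ∈ G and a ∈ A, is a group isomorphism from the additive group of all functions A → ℤ/pℤ onto the center of H. In particular the center of H is elementary abelian of order p^{|A|}. -/
/-!
The constant-in-`G` functions `α_f` are fixed by the `G`-action, hence central in `M ⋊ G`. They lie
in `H`: the power `x_a ^ orderOf (φ a)` of a generator is the indicator of `⟨φ a⟩ × {a}`, `H ∩ M` is
stable under translation by `G` because `H` maps onto `G`, and the translates of that indicator by a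
transversal of `⟨φ a⟩` add up to the indicator of `G × {a}`.

Conversely let `z = (m, g)` centralise `H`. Commuting with `x_a ^ orderOf (φ a)` forces
`g ∈ ⟨φ a⟩`, and commuting with `x_a` says `δ_(1,a) + φ a • m = m + δ_(g,a)`. For a letter `b ≠ a`
the column `m(·, b)` is therefore invariant under `⟨φ a⟩ ∋ g`, whereas the equation for `b` makes
it jump by `1` exactly once on the way from `g` down to `1` in steps of `(φ b)⁻¹`; hence `g = 1`.
Then every column is invariant under all `φ a`, i.e. under `G`, so `m = α_f`.
-/

open Multiplicative

/-- The shift action of `g : G` on functions `(G × A) → R`: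
`(g · α)(h, a) = α (g⁻¹h, a)`. -/
def cayAct {G A : Type*} (R : Type*) [Group G] [AddCommGroup R] (g : G) :
    ((G × A) → R) ≃+ ((G × A) → R) where
  toFun α := fun x => α (g⁻¹ * x.1, x.2)
  invFun α := fun x => α (g * x.1, x.2)
  left_inv := by intro α; funext x; simp
  right_inv := by intro α; funext x; simp
  map_add' := by intro α β; rfl

/-- The action of `G` on the (multiplicatively written) additive group `M` of
functions `(G × A) → R`, as a homomorphism into the automorphism group; it is
used to form the semidirect product `M ⋊ G`. -/
def cayHom (G A R : Type*) [Group G] [AddCommGroup R] :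
    G →* MulAut (Multiplicative ((G × A) → R)) where
  toFun g := AddEquiv.toMultiplicative (cayAct R g)
  map_one' := by
    apply MulEquiv.ext
    intro α
    apply Multiplicative.toAdd.injective
    funext x
    simp [cayAct, AddEquiv.toMultiplicative]
  map_mul' := by
    intro g h
    apply MulEquiv.ext
    intro α
    apply Multiplicative.toAdd.injective
    funext x
    simp [cayAct, AddEquiv.toMultiplicative, mul_assoc]

/-- The generator `(δ_{(1,a)}, φ a)` of `M ⋊ G`. -/
def cayGen {G A : Type*} (R : Type*) [Group G] [AddCommGroup R] [One R]
    [DecidableEq G] [DecidableEq A] (φ : A → G) (a : A) :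
    Multiplicative ((G × A) → R) ⋊[cayHom G A R] G :=
  ⟨ofAdd (fun x => if x = ((1 : G), a) then (1 : R) else 0), φ a⟩

/-- The model `H` of the universal Gaschütz `p`-extension `G^{ℤ/p}`: the subgroup
of `M ⋊ G` generated by the elements `(δ_{(1,a)}, φ a)` for `a ∈ A`. -/
def gaschutzH (G A : Type*) [Group G] [DecidableEq G] [DecidableEq A]
    (p : ℕ) (φ : A → G) :
    Subgroup (Multiplicative ((G × A) → ZMod p) ⋊[cayHom G A (ZMod p)] G) :=
  Subgroup.closure (Set.range (cayGen (ZMod p) φ))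


open SemidirectProduct

attribute [local instance] arrowAction

section Counting

variable {G A R : Type*} [Group G] [AddCommMonoid R] [One R]

theorem sum_range_orderOf_single_pow [DecidableEq G] [DecidableEq A] {t : G}
    (ht : IsOfFinOrder t) (a : A) :
    ∑ i ∈ Finset.range (orderOf t), Pi.single (t ^ i, a) (1 : R) =
      ((Subgroup.zpowers t : Set G) ×ˢ {a}).indicator 1 := by
  classical
  ext ⟨y, b⟩
  rw [Finset.sum_apply, Set.indicator_apply]
  by_cases hb : b = a
  · subst hb
    have hinj : Set.InjOn (t ^ ·) (Finset.range (orderOf t) : Set ℕ) := by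
      simpa [Finset.coe_range] using pow_injOn_Iio_orderOf
    simp only [Pi.single_apply, Prod.mk.injEq, and_true, Set.mem_prod, Set.mem_singleton_iff,
      SetLike.mem_coe, ← ht.mem_powers_iff_mem_zpowers, ht.mem_powers_iff_mem_range_orderOf]
    rw [← Finset.sum_image (f := fun z => if y = z then (1 : R) else 0) hinj, Finset.sum_ite_eq]
    rfl
  · simp [hb]

theorem sum_indicator_out_inv_mul (C : Subgroup G) [Fintype (G ⧸ C)] (y : G) :
    ∑ q : G ⧸ C, (C : Set G).indicator (1 : G → R) (q.out⁻¹ * y) = 1 := by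
  classical
  have key : ∀ q : G ⧸ C, q.out⁻¹ * y ∈ C ↔ (y : G ⧸ C) = q := fun q => by
    rw [← QuotientGroup.eq, QuotientGroup.out_eq', eq_comm]
  simp only [Set.indicator_apply, SetLike.mem_coe, key, Pi.one_apply, Finset.sum_ite_eq,
    Finset.mem_univ, if_true]

end Counting

theorem eq_one_of_single_add_translate {G R : Type*} [Group G] [DecidableEq G] [AddCommGroup R]
    [One R] [NeZero (1 : R)] {t g : G} {u : G → R} (hg : g ∈ Submonoid.powers t)
    (hu : ∀ y, u (g⁻¹ * y) = u y)
    (ht : ∀ y, (Pi.single 1 1 : G → R) y + u (t⁻¹ * y) = u y + (Pi.single g 1 : G → R) y) :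
    g = 1 := by
  by_contra hg1
  have hex : ∃ n, t ^ n = g := hg
  set c := Nat.find hex
  have hc : t ^ c = g := Nat.find_spec hex
  have hc0 : c ≠ 0 := fun h => hg1 (by rw [← hc, h, pow_zero])
  have hne_g : ∀ i < c, t ^ i ≠ g := fun i hi => Nat.find_min hex hi
  have hne_one : ∀ i, 0 < i → i < c → t ^ i ≠ 1 := fun i hi0 hic h => by
    refine hne_g (c - i) (by omega) ?_
    calc t ^ (c - i) = t ^ (c - i) * t ^ i := by rw [h, mul_one]
      _ = g := by rw [← pow_add, Nat.sub_add_cancel hic.le, hc]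
  have hconst : ∀ i < c, u (t ^ i) = u 1 := by
    intro i hi
    induction i with
    | zero => rw [pow_zero]
    | succ i ih =>
      have h := ht (t ^ (i + 1))
      rw [Pi.single_eq_of_ne (hne_one _ (by omega) hi), Pi.single_eq_of_ne (hne_g _ hi),
        zero_add, add_zero, pow_succ', inv_mul_cancel_left] at h
      rw [pow_succ', ← h, ih (by omega)]
  have hpred : t⁻¹ * g = t ^ (c - 1) := by
    rw [inv_mul_eq_iff_eq_mul, ← pow_succ', Nat.sub_add_cancel (Nat.one_le_iff_ne_zero.2 hc0), hc]
  have h := ht g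
  rw [Pi.single_eq_of_ne hg1, Pi.single_eq_same, hpred, hconst _ (by omega), ← hu g,
    inv_mul_cancel, zero_add] at h
  exact one_ne_zero (left_eq_add.1 h)

namespace SemidirectProduct

variable {N G : Type*} [CommGroup N] [Group G] {φ : G →* MulAut N}

theorem mul_inl_mul_inv (w : N ⋊[φ] G) (n : N) : w * inl n * w⁻¹ = inl (φ w.right n) := by
  ext <;> simp [mul_comm]

theorem commute_inl_iff {n : N} {z : N ⋊[φ] G} : Commute (inl n) z ↔ φ z.right n = n := by
  simp only [Commute, SemiconjBy, SemidirectProduct.ext_iff, mul_left, mul_right, left_inl,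
    right_inl, map_one, MulAut.one_apply, one_mul, mul_one, and_true]
  rw [mul_comm z.left, mul_left_inj, eq_comm]

end SemidirectProduct

section CayleyModule

variable {G A R : Type*} [Group G] [AddCommGroup R]

theorem cayAct_apply (g : G) (α : G × A → R) (x : G × A) :
    cayAct R g α x = α (g⁻¹ * x.1, x.2) := rfl

@[simp]
theorem toAdd_cayHom (g : G) (m : Multiplicative (G × A → R)) :
    toAdd (cayHom G A R g m) = cayAct R g (toAdd m) := rfl

variable (G A R) in
def constHom : Multiplicative (A → R) →* Multiplicative (G × A → R) ⋊[cayHom G A R] G where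
  toFun f := inl (ofAdd fun x => toAdd f x.2)
  map_one' := map_one inl
  map_mul' f f' := by rw [← map_mul]; rfl

theorem commute_constHom (f : Multiplicative (A → R))
    (w : Multiplicative (G × A → R) ⋊[cayHom G A R] G) : Commute (constHom G A R f) w :=
  commute_inl_iff.2 rfl

theorem constHom_injective : Function.Injective (constHom G A R) := fun _ _ h =>
  toAdd.injective <| funext fun a => congrFun (congrArg (fun w => toAdd w.left) h) (1, a)

variable [DecidableEq G] [DecidableEq A]

@[simp]
theorem cayAct_single (g h : G) (a : A) (r : R) :
    cayAct R g (Pi.single (h, a) r) = Pi.single (g * h, a) r := by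
  ext x
  simp [cayAct_apply, Pi.single_apply, Prod.ext_iff, inv_mul_eq_iff_eq_mul]

variable [One R]

@[simp]
theorem cayGen_right (φ : A → G) (a : A) : (cayGen R φ a).right = φ a := rfl

@[simp]
theorem toAdd_cayGen_left (φ : A → G) (a : A) :
    toAdd (cayGen R φ a).left = Pi.single (1, a) 1 := by
  ext x
  simp [cayGen, Pi.single_apply]

theorem cayGen_pow (φ : A → G) (a : A) (n : ℕ) :
    cayGen R φ a ^ n =
      ⟨ofAdd (∑ i ∈ Finset.range n, Pi.single (φ a ^ i, a) 1), φ a ^ n⟩ := by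
  induction n with
  | zero => ext <;> simp
  | succ n ih =>
    rw [pow_succ, ih]
    ext x
    · show _ + toAdd (cayHom G A R _ _) x = _
      simp [Finset.sum_range_succ, -map_pow]
    · exact (pow_succ _ _).symm

theorem cayGen_pow_orderOf (φ : A → G) (a : A) :
    cayGen R φ a ^ orderOf (φ a) =
      inl (ofAdd (∑ i ∈ Finset.range (orderOf (φ a)), Pi.single (φ a ^ i, a) 1)) := by
  rw [cayGen_pow, pow_orderOf_eq_one]
  rfl

theorem single_add_cayAct_of_commute {φ : A → G} {a : A}
    {z : Multiplicative (G × A → R) ⋊[cayHom G A R] G} (h : Commute (cayGen R φ a) z)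
    (x : G × A) :
    (Pi.single (1, a) 1 : G × A → R) x + toAdd z.left ((φ a)⁻¹ * x.1, x.2) =
      toAdd z.left x + (Pi.single (z.right, a) 1 : G × A → R) x := by
  have hx := congrArg
    (fun w : Multiplicative (G × A → R) ⋊[cayHom G A R] G => toAdd w.left x) h.eq
  simpa [cayAct_apply] using hx

theorem mem_stabilizer_column_of_commute {φ : A → G} {a b : A}
    {z : Multiplicative (G × A → R) ⋊[cayHom G A R] G} (h : Commute (cayGen R φ a) z)
    (hb : b ≠ a ∨ z.right = 1) :
    φ a ∈ MulAction.stabilizer G fun y => toAdd z.left (y, b) := by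
  rw [MulAction.mem_stabilizer_iff]
  ext y
  have hy := single_add_cayAct_of_commute h (y, b)
  change toAdd z.left ((φ a)⁻¹ * y, b) = toAdd z.left (y, b)
  rcases hb with hb | hb
  · simpa [Pi.single_apply, hb] using hy
  · rw [hb, add_comm] at hy
    exact add_right_cancel hy

end CayleyModule

section Gaschutz

variable {G A : Type*} [Group G] [DecidableEq G] [DecidableEq A] {p : ℕ} {φ : A → G}

theorem map_rightHom_gaschutzH :
    (gaschutzH G A p φ).map rightHom = Subgroup.closure (Set.range φ) := by
  rw [gaschutzH, MonoidHom.map_closure, ← Set.range_comp]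
  rfl

theorem exists_mem_gaschutzH_right_eq (hgen : Subgroup.closure (Set.range φ) = ⊤) (g : G) :
    ∃ w ∈ gaschutzH G A p φ, w.right = g := by
  have hg : g ∈ (gaschutzH G A p φ).map rightHom := by
    rw [map_rightHom_gaschutzH, hgen]
    trivial
  exact Subgroup.mem_map.1 hg

variable (G A p φ) in
def gaschutzKer : Submodule (ZMod p) (G × A → ZMod p) :=
  AddSubgroup.toZModSubmodule p (Subgroup.toAddSubgroup' ((gaschutzH G A p φ).comap inl))

theorem mem_gaschutzKer {α : G × A → ZMod p} :
    α ∈ gaschutzKer G A p φ ↔ inl (ofAdd α) ∈ gaschutzH G A p φ := Iff.rfl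

theorem cayAct_mem_gaschutzKer (hgen : Subgroup.closure (Set.range φ) = ⊤) (g : G)
    {α : G × A → ZMod p} (hα : α ∈ gaschutzKer G A p φ) :
    cayAct (ZMod p) g α ∈ gaschutzKer G A p φ := by
  obtain ⟨w, hw, rfl⟩ := exists_mem_gaschutzH_right_eq (p := p) hgen g
  have hconj := mul_mem (mul_mem hw (mem_gaschutzKer.1 hα)) (inv_mem hw)
  rwa [mul_inl_mul_inv] at hconj

variable [Finite G]

theorem zpowers_column_mem_gaschutzKer (a : A) :
    ((Subgroup.zpowers (φ a) : Set G) ×ˢ {a}).indicator 1 ∈ gaschutzKer G A p φ := by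
  rw [← sum_range_orderOf_single_pow (isOfFinOrder_of_finite _), mem_gaschutzKer,
    ← cayGen_pow_orderOf]
  exact pow_mem (Subgroup.subset_closure (Set.mem_range_self a)) _

theorem column_mem_gaschutzKer (hgen : Subgroup.closure (Set.range φ) = ⊤) (a : A) :
    (Prod.snd ⁻¹' {a} : Set (G × A)).indicator 1 ∈ gaschutzKer G A p φ := by
  let C := Subgroup.zpowers (φ a)
  have : Fintype (G ⧸ C) := Fintype.ofFinite _
  have hsum : ∑ q : G ⧸ C, cayAct (ZMod p) q.out (((C : Set G) ×ˢ {a}).indicator 1) ∈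
      gaschutzKer G A p φ :=
    Submodule.sum_mem _ fun q _ =>
      cayAct_mem_gaschutzKer hgen q.out (zpowers_column_mem_gaschutzKer a)
  convert hsum using 1
  ext ⟨y, b⟩
  rw [Finset.sum_apply]
  by_cases hb : b = a
  · subst hb
    simpa [cayAct_apply, Set.indicator_prod_one] using
      (sum_indicator_out_inv_mul (R := ZMod p) C y).symm
  · simp [cayAct_apply, hb]

theorem const_mem_gaschutzKer [Fintype A] (hgen : Subgroup.closure (Set.range φ) = ⊤)
    (f : A → ZMod p) : (fun x : G × A => f x.2) ∈ gaschutzKer G A p φ := by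
  have hf : (fun x : G × A => f x.2) =
      ∑ a, f a • (Prod.snd ⁻¹' {a} : Set (G × A)).indicator 1 := by
    classical
    ext ⟨y, b⟩
    simp [Set.indicator_apply, Set.mem_preimage]
  rw [hf]
  exact sum_mem fun a _ => Submodule.smul_mem _ _ (column_mem_gaschutzKer hgen a)

section Center

variable {z : Multiplicative (G × A → ZMod p) ⋊[cayHom G A (ZMod p)] G}
  (hz : ∀ w ∈ gaschutzH G A p φ, Commute w z)
include hz

theorem right_mem_zpowers_of_commute [Nontrivial (ZMod p)] (a : A) :
    z.right ∈ Subgroup.zpowers (φ a) := by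
  set ℓ := ((Subgroup.zpowers (φ a) : Set G) ×ˢ {a}).indicator (1 : G × A → ZMod p)
  have hfix : cayAct (ZMod p) z.right ℓ = ℓ :=
    congrArg toAdd (commute_inl_iff.1 (hz _ (mem_gaschutzKer.1 (zpowers_column_mem_gaschutzKer a))))
  have h1 := congrFun hfix (z.right, a)
  rw [cayAct_apply, inv_mul_cancel] at h1
  have hne : ℓ (z.right, a) ≠ 0 := by
    rw [← h1]
    simp [ℓ, Set.indicator_of_mem]
  exact (Set.mem_of_indicator_ne_zero hne).1

theorem right_eq_one_of_commute [Nontrivial A] [Nontrivial (ZMod p)] : z.right = 1 := by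
  obtain ⟨a, b, hab⟩ := exists_pair_ne A
  have hcomm : ∀ c, Commute (cayGen (ZMod p) φ c) z := fun c =>
    hz _ (Subgroup.subset_closure (Set.mem_range_self c))
  refine eq_one_of_single_add_translate (t := φ b) (u := fun y => toAdd z.left (y, b)) ?_ ?_ ?_
  · exact (isOfFinOrder_of_finite _).mem_powers_iff_mem_zpowers.2
      (right_mem_zpowers_of_commute hz b)
  · have hstab := Subgroup.zpowers_le.2
      (mem_stabilizer_column_of_commute (hcomm a) (Or.inl hab.symm))
      (right_mem_zpowers_of_commute hz a)
    exact congrFun (MulAction.mem_stabilizer_iff.1 hstab)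
  · intro y
    simpa [Pi.single_apply] using single_add_cayAct_of_commute (hcomm b) (y, b)

theorem eq_constHom_of_commute [Nontrivial A] [Nontrivial (ZMod p)]
    (hgen : Subgroup.closure (Set.range φ) = ⊤) :
    z = constHom G A (ZMod p) (ofAdd fun b => toAdd z.left (1, b)) := by
  have hright := right_eq_one_of_commute hz
  have hstab : ∀ b, MulAction.stabilizer G (fun y => toAdd z.left (y, b)) = ⊤ := by
    intro b
    rw [eq_top_iff, ← hgen, Subgroup.closure_le]
    rintro _ ⟨a, rfl⟩
    exact mem_stabilizer_column_of_commute (hz _ (Subgroup.subset_closure (Set.mem_range_self a)))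
      (Or.inr hright)
  refine SemidirectProduct.ext ?_ hright
  ext ⟨y, b⟩
  have hy := congrFun
    (MulAction.mem_stabilizer_iff.1 ((Subgroup.eq_top_iff' _).1 (hstab b) y⁻¹)) 1
  change toAdd z.left ((y⁻¹)⁻¹ * 1, b) = toAdd z.left (1, b) at hy
  change toAdd z.left (y, b) = toAdd z.left (1, b)
  rwa [inv_inv, mul_one] at hy

end Center

variable [Fintype A] (hgen : Subgroup.closure (Set.range φ) = ⊤)

variable (p) in
def constCenterHom : Multiplicative (A → ZMod p) →* Subgroup.center (gaschutzH G A p φ) :=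
  ((constHom G A (ZMod p)).codRestrict _ fun f => const_mem_gaschutzKer hgen (toAdd f)).codRestrict
    _ fun f => Subgroup.mem_center_iff.2 fun w => Subtype.ext (commute_constHom f w.1).symm

theorem constCenterHom_injective : Function.Injective (constCenterHom p hgen) := fun _ _ h =>
  constHom_injective (congrArg (fun w => w.1.1) h)

theorem constCenterHom_surjective [Nontrivial A] [Nontrivial (ZMod p)] :
    Function.Surjective (constCenterHom p hgen) := by
  rintro ⟨⟨z, hzH⟩, hzc⟩
  have hz : ∀ w ∈ gaschutzH G A p φ, Commute w z := fun w hw =>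
    congrArg Subtype.val (Subgroup.mem_center_iff.1 hzc ⟨w, hw⟩)
  exact ⟨_, Subtype.ext (Subtype.ext (eq_constHom_of_commute hz hgen).symm)⟩

end Gaschutz

/-- The map `f ↦ (α_f, 1)` (where `α_f(g,a) = f a`) is a group
isomorphism from the additive group of functions `A → ℤ/pℤ` onto the center of
`H = G^{ℤ/p}`; in particular the center has order `p^|A|`. -/
theorem center_of_gaschutz_is_elementary_abelian
    {G A : Type*} [Group G] [Fintype G] [Fintype A] [DecidableEq G] [DecidableEq A]
    (hA : 2 ≤ Fintype.card A)
    (p : ℕ) (hp : p.Prime)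
    (φ : A → G) (hgen : Subgroup.closure (Set.range φ) = ⊤) :
    (∃ e : Multiplicative (A → ZMod p) ≃* Subgroup.center (gaschutzH G A p φ),
      ∀ f : A → ZMod p,
        ((e (ofAdd f) : gaschutzH G A p φ) :
            Multiplicative ((G × A) → ZMod p) ⋊[cayHom G A (ZMod p)] G) =
          ⟨ofAdd (fun x : G × A => f x.2), (1 : G)⟩) ∧
    Nat.card (Subgroup.center (gaschutzH G A p φ)) = p ^ Fintype.card A := by
  have : Fact p.Prime := ⟨hp⟩
  have : Nontrivial A := Fintype.one_lt_card_iff_nontrivial.1 hA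
  let e := MulEquiv.ofBijective (constCenterHom p hgen)
    ⟨constCenterHom_injective hgen, constCenterHom_surjective hgen⟩
  refine ⟨⟨e, fun _ => rfl⟩, ?_⟩
  rw [← Nat.card_congr e.toEquiv, Nat.card_congr toAdd, Nat.card_fun, Nat.card_zmod,
    Nat.card_eq_fintype_card]
end

section
/- Let Ω be a subset of G containing the identity 1, and let w be an element of the free group F on A with [w]_G ∉ Ω. Then the net signed number of traversals by the path of w of the edges crossing the boundary of Ω equals 1; precisely, Σ c_w(h, a) over all (h, a) ∈ G × A with h ∈ Ω and h·φ(a) ∉ Ω, minus Σ c_w(h, a) over all (h, a) ∈ G × A with h ∉ Ω and h·φ(a) ∈ Ω, equals 1. -/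
open Multiplicative

/-- The homomorphism from the free group on `A` to `M ⋊ G` sending `a` to
`(δ_{(1,a)}, φ a)`. -/
def cayLift {G A : Type*} (R : Type*) [Group G] [AddCommGroup R] [One R]
    [DecidableEq G] [DecidableEq A] (φ : A → G) :
    FreeGroup A →* (Multiplicative ((G × A) → R) ⋊[cayHom G A R] G) :=
  FreeGroup.lift (cayGen R φ)

/-- The edge-traversal count `c_w : G × A → ℤ` of a word `w` in the free group:
`c_w (g, a)` is the signed number of times the path reading `w` from `1` in the
Cayley graph of `G` traverses the edge from `g` to `g·φ a` labeled `a`. -/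
def edgeCount {G A : Type*} [Group G] [DecidableEq G] [DecidableEq A]
    (φ : A → G) (w : FreeGroup A) : (G × A) → ℤ :=
  toAdd (cayLift ℤ φ w).left

/-!
The edge counts satisfy a discrete fundamental theorem of calculus: pairing `c_w` with the
coboundary `(h, a) ↦ f h - f (h · φ a)` of any function `f` on `G` gives `f 1 - f [w]_G`,
since the path of `w` runs from `1` to `[w]_G`. For `f` the indicator function of `Ω`, the
coboundary is `1` on the edges leaving `Ω`, `-1` on the edges entering it and `0` elsewhere.
-/

theorem sum_comp_mul_left_fst {G A M : Type*} [Group G] [Fintype G] [Fintype A]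
    [AddCommMonoid M] (g : G) (F : G × A → M) :
    ∑ x : G × A, F (g * x.1, x.2) = ∑ x, F x :=
  ((Equiv.mulLeft g).prodCongr (Equiv.refl A)).sum_comp F

section EdgeCount

variable {G A : Type*} [Group G] [DecidableEq G] [DecidableEq A] (φ : A → G)

theorem rightHom_comp_cayLift (R : Type*) [AddCommGroup R] [One R] :
    SemidirectProduct.rightHom.comp (cayLift R φ) = FreeGroup.lift φ :=
  FreeGroup.ext_hom _ _ fun _ => rfl

theorem cayLift_right (R : Type*) [AddCommGroup R] [One R] (w : FreeGroup A) :
    (cayLift R φ w).right = FreeGroup.lift φ w :=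
  DFunLike.congr_fun (rightHom_comp_cayLift φ R) w

theorem edgeCount_of (a : A) :
    edgeCount φ (FreeGroup.of a) = fun x => if x = ((1 : G), a) then 1 else 0 := by
  simp [edgeCount, cayLift, cayGen]

theorem edgeCount_mul (u v : FreeGroup A) (x : G × A) :
    edgeCount φ (u * v) x
      = edgeCount φ u x + edgeCount φ v ((FreeGroup.lift φ u)⁻¹ * x.1, x.2) := by
  simp only [edgeCount, map_mul, SemidirectProduct.mul_left, toAdd_mul, Pi.add_apply,
    ← cayLift_right φ ℤ u]
  rfl

theorem edgeCount_inv (w : FreeGroup A) (x : G × A) :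
    edgeCount φ w⁻¹ x = -edgeCount φ w (FreeGroup.lift φ w * x.1, x.2) := by
  simp only [edgeCount, map_inv, SemidirectProduct.inv_left, ← cayLift_right φ ℤ w]
  rfl

variable [Fintype G] [Fintype A]

theorem sum_edgeCount_smul_sub {M : Type*} [AddCommGroup M] (w : FreeGroup A) (f : G → M) :
    ∑ x : G × A, edgeCount φ w x • (f x.1 - f (x.1 * φ x.2)) = f 1 - f (FreeGroup.lift φ w) := by
  induction w using FreeGroup.induction_on generalizing f with
  | C1 => simp [edgeCount]
  | of a => simp [edgeCount_of, ite_smul]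
  | inv_of a ih =>
    set g := FreeGroup.lift φ (FreeGroup.of a)
    calc ∑ x : G × A, edgeCount φ (FreeGroup.of a)⁻¹ x • (f x.1 - f (x.1 * φ x.2))
        = -∑ x : G × A, edgeCount φ (FreeGroup.of a) x •
            (f (g⁻¹ * x.1) - f (g⁻¹ * x.1 * φ x.2)) := by
          rw [← sum_comp_mul_left_fst g⁻¹, ← Finset.sum_neg_distrib]
          simp [edgeCount_inv, g]
      _ = f 1 - f (FreeGroup.lift φ (FreeGroup.of a)⁻¹) := by
          simp only [mul_assoc, ih fun h => f (g⁻¹ * h), g]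
          simp
  | mul u v ihu ihv =>
    set g := FreeGroup.lift φ u
    calc ∑ x : G × A, edgeCount φ (u * v) x • (f x.1 - f (x.1 * φ x.2))
        = (f 1 - f g) + ∑ x : G × A, edgeCount φ v x • (f (g * x.1) - f (g * x.1 * φ x.2)) := by
          simp only [edgeCount_mul, add_smul, Finset.sum_add_distrib, ihu,
            ← sum_comp_mul_left_fst g (fun x => edgeCount φ v (g⁻¹ * x.1, x.2) • _),
            inv_mul_cancel_left, g]
      _ = f 1 - f (FreeGroup.lift φ (u * v)) := by
          simp [mul_assoc, ihv fun h => f (g * h), g]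

end EdgeCount

theorem boundary_crossing_count_general
    {G A : Type*} [Group G] [Fintype G] [Fintype A] [DecidableEq G] [DecidableEq A]
    (φ : A → G)
    (Ω : Set G) [DecidablePred (· ∈ Ω)] (hΩ : (1 : G) ∈ Ω)
    (w : FreeGroup A) (hw : FreeGroup.lift φ w ∉ Ω) :
    (∑ x ∈ Finset.univ.filter (fun x : G × A => x.1 ∈ Ω ∧ x.1 * φ x.2 ∉ Ω),
        edgeCount φ w x) -
      (∑ x ∈ Finset.univ.filter (fun x : G × A => x.1 ∉ Ω ∧ x.1 * φ x.2 ∈ Ω),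
        edgeCount φ w x) = 1 := by
  set χ : G → ℤ := fun g => if g ∈ Ω then 1 else 0
  rw [Finset.sum_filter, Finset.sum_filter, ← Finset.sum_sub_distrib]
  calc _ = ∑ x : G × A, edgeCount φ w x • (χ x.1 - χ (x.1 * φ x.2)) := by
        refine Finset.sum_congr rfl fun x _ => ?_
        by_cases h₁ : x.1 ∈ Ω <;> by_cases h₂ : x.1 * φ x.2 ∈ Ω <;> simp [χ, h₁, h₂]
    _ = χ 1 - χ (FreeGroup.lift φ w) := sum_edgeCount_smul_sub φ w χ
    _ = 1 := by simp [χ, hΩ, hw]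

/-- If `Ω ⊆ G` contains `1` and `w` evaluates outside `Ω`,
then the net signed number of traversals by the path of `w` of the edges
crossing the boundary of `Ω` equals `1`. -/
theorem boundary_crossing_count
    {G A : Type*} [Group G] [Fintype G] [Fintype A] [DecidableEq G] [DecidableEq A]
    (φ : A → G) (hgen : Subgroup.closure (Set.range φ) = ⊤)
    (Ω : Set G) [DecidablePred (· ∈ Ω)] (hΩ : (1 : G) ∈ Ω)
    (w : FreeGroup A) (hw : FreeGroup.lift φ w ∉ Ω) :
    (∑ x ∈ Finset.univ.filter (fun x : G × A => x.1 ∈ Ω ∧ x.1 * φ x.2 ∉ Ω),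
        edgeCount φ w x) -
      (∑ x ∈ Finset.univ.filter (fun x : G × A => x.1 ∉ Ω ∧ x.1 * φ x.2 ∈ Ω),
        edgeCount φ w x) = 1 :=
  boundary_crossing_count_general φ Ω hΩ w hw
end

section
/- Suppose the prime p does not divide the order of G. If B is a commutative group and f : H → B is a group homomorphism whose kernel contains the center of H, then the kernel of f contains the kernel of the projection π : H → G (the restriction to H of the coordinate projection M ⋊ G → G); equivalently, f factors as f = g ∘ π for some homomorphism g : G → B. In particular, every abelian quotient of H/Z(H) (a model of G^{∼ℤ/p}) is a quotient of G. -/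
open Multiplicative

/-- The projection `π : H → G`, the restriction to `H` of `M ⋊ G → G`. -/
def gaschutzPi (G A : Type*) [Group G] [DecidableEq G] [DecidableEq A]
    (p : ℕ) (φ : A → G) : gaschutzH G A p φ →* G :=
  SemidirectProduct.rightHom.comp (gaschutzH G A p φ).subtype

/-! For `x = (m, 1)` in the kernel of `π`, the conjugates of `x` by lifts of the elements of `G`
multiply to `(∏_g g·m, 1)`, which is `G`-invariant and therefore central in `H`. Hence `f` kills
it, i.e. `f x ^ |G| = 1`; since also `x ^ p = 1` and `p` is coprime to `|G|`, `f x = 1`. -/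

theorem Multiplicative.pow_char_eq_one {M : Type*} [AddCommGroup M] (p : ℕ) [Module (ZMod p) M]
    (n : Multiplicative M) : n ^ p = 1 :=
  congrArg ofAdd (ZModModule.char_nsmul_eq_zero p n.toAdd)

theorem aut_apply_prod_aut {N G : Type*} [CommGroup N] [Group G] [Fintype G]
    (ψ : G →* MulAut N) (n : N) (h : G) : ψ h (∏ g, ψ g n) = ∏ g, ψ g n := by
  rw [map_prod]
  simp only [← MulAut.mul_apply, ← map_mul]
  exact Fintype.prod_equiv (Equiv.mulLeft h) _ _ fun g => rfl

namespace SemidirectProduct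

variable {N G : Type*} [CommGroup N] [Group G] {ψ : G →* MulAut N}

theorem conj_inl (h : N ⋊[ψ] G) (n : N) : h * inl n * h⁻¹ = inl (ψ h.right n) := by
  ext <;> simp [mul_comm h.left, mul_assoc]

theorem inl_mem_center {n : N} (hn : ∀ g, ψ g n = n) :
    (inl n : N ⋊[ψ] G) ∈ Subgroup.center _ :=
  Subgroup.mem_center_iff.2 fun x => by ext <;> simp [hn, mul_comm]

variable {H : Subgroup (N ⋊[ψ] G)}

theorem aut_mem_comap_inl (hH : Function.Surjective (rightHom.comp H.subtype)) {n : N}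
    (hn : n ∈ H.comap inl) (g : G) : ψ g n ∈ H.comap inl := by
  obtain ⟨h, rfl⟩ := hH g
  show inl (ψ h.1.right n) ∈ H
  rw [← conj_inl]
  exact H.mul_mem (H.mul_mem h.2 hn) (H.inv_mem h.2)

variable [Fintype G] {B : Type*} [CommGroup B]

theorem map_inl_pow_card_eq_one (hH : Function.Surjective (rightHom.comp H.subtype))
    (f : H →* B) (hf : Subgroup.center H ≤ f.ker) {n : N} (hn : inl n ∈ H) :
    f ⟨inl n, hn⟩ ^ Fintype.card G = 1 := by
  -- The norm is formed in the commutative group `H.comap inl`, where `map_prod` applies to `f`.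
  let f' : H.comap inl →* B := f.comp (inl.subgroupComap H)
  let conj (g : G) : H.comap inl := ⟨ψ g n, aut_mem_comap_inl hH hn g⟩
  have hconj (g : G) : f' (conj g) = f ⟨inl n, hn⟩ := by
    obtain ⟨h, rfl⟩ := hH g
    calc f' (conj _) = f (h * ⟨inl n, hn⟩ * h⁻¹) :=
          congrArg f (Subtype.ext (conj_inl h.1 n).symm)
      _ = f ⟨inl n, hn⟩ := by rw [map_mul, map_mul, map_inv, mul_inv_cancel_comm]
  have hcentral : inl.subgroupComap H (∏ g, conj g) ∈ Subgroup.center H := by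
    refine Subgroup.mem_center_iff.2 fun y => Subtype.ext ?_
    have hnorm : ((∏ g, conj g : H.comap inl) : N) = ∏ g, ψ g n := by simp [conj]
    have := inl_mem_center (ψ := ψ) (aut_apply_prod_aut ψ n)
    rw [← hnorm] at this
    exact Subgroup.mem_center_iff.1 this y
  calc f ⟨inl n, hn⟩ ^ Fintype.card G = f' (∏ g, conj g) := by simp [map_prod, hconj]
    _ = 1 := hf hcentral

theorem ker_le_ker_of_center_le_ker (hH : Function.Surjective (rightHom.comp H.subtype))
    (f : H →* B) (hf : Subgroup.center H ≤ f.ker) {p : ℕ} (hp : p.Coprime (Fintype.card G))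
    (hN : ∀ n : N, n ^ p = 1) : (rightHom.comp H.subtype).ker ≤ f.ker := by
  rintro ⟨x, hxH⟩ hx
  obtain ⟨n, rfl⟩ : x ∈ (inl : N →* N ⋊[ψ] G).range := by
    rwa [range_inl_eq_ker_rightHom]
  have hp_pow : f ⟨inl n, hxH⟩ ^ p = 1 := by
    rw [← map_pow, ← map_one f]
    exact congrArg f (Subtype.ext (by simp [← map_pow, hN]))
  exact (pow_eq_one_iff_of_coprime hp).1 ⟨hp_pow, map_inl_pow_card_eq_one hH f hf hxH⟩

end SemidirectProduct

theorem gaschutzPi_surjective {G A : Type*} [Group G] [DecidableEq G] [DecidableEq A]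
    (p : ℕ) {φ : A → G} (hgen : Subgroup.closure (Set.range φ) = ⊤) :
    Function.Surjective (gaschutzPi G A p φ) := by
  rw [← MonoidHom.range_eq_top, gaschutzPi, MonoidHom.range_comp, Subgroup.range_subtype,
    gaschutzH, MonoidHom.map_closure, ← Set.range_comp]
  exact hgen

theorem abelian_quotients_of_gaschutz_general
    {G A : Type*} [Group G] [Fintype G] [DecidableEq G] [DecidableEq A]
    (p : ℕ) (hp : p.Prime) (hpG : ¬ p ∣ Fintype.card G)
    (φ : A → G) (hgen : Subgroup.closure (Set.range φ) = ⊤)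
    (B : Type*) [CommGroup B]
    (f : gaschutzH G A p φ →* B)
    (hf : Subgroup.center (gaschutzH G A p φ) ≤ f.ker) :
    (MonoidHom.ker (gaschutzPi G A p φ) ≤ f.ker) ∧
    ∃ g : G →* B, f = g.comp (gaschutzPi G A p φ) := by
  have hsurj := gaschutzPi_surjective p hgen
  have hker : (gaschutzPi G A p φ).ker ≤ f.ker :=
    SemidirectProduct.ker_le_ker_of_center_le_ker hsurj f hf (hp.coprime_iff_not_dvd.2 hpG)
      (Multiplicative.pow_char_eq_one p)
  exact ⟨hker, _, ((gaschutzPi G A p φ).liftOfRightInverse_comp _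
    (Function.rightInverse_surjInv hsurj) ⟨f, hker⟩).symm⟩

/-- Suppose `p ∤ |G|`.  If `B` is commutative and
`f : H →* B` kills the center of `H = G^{ℤ/p}`, then `f` kills the kernel of
the projection `π : H → G`, i.e. `f` factors through `π`.  In particular every
abelian quotient of `H/Z(H) = G^{∼ℤ/p}` is a quotient of `G`. -/
theorem abelian_quotients_of_gaschutz
    {G A : Type*} [Group G] [Fintype G] [Fintype A] [DecidableEq G] [DecidableEq A]
    (hA : 2 ≤ Fintype.card A)
    (p : ℕ) (hp : p.Prime) (hpG : ¬ p ∣ Fintype.card G)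
    (φ : A → G) (hgen : Subgroup.closure (Set.range φ) = ⊤)
    (B : Type*) [CommGroup B]
    (f : gaschutzH G A p φ →* B)
    (hf : Subgroup.center (gaschutzH G A p φ) ≤ f.ker) :
    (MonoidHom.ker (gaschutzPi G A p φ) ≤ f.ker) ∧
    ∃ g : G →* B, f = g.comp (gaschutzPi G A p φ) :=
  abelian_quotients_of_gaschutz_general p hp hpG φ hgen B f hf
end
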